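/- Let L be a geometric lattice with atom set E, and for A ⊆ E let ⋁A denote the join of the atoms in A. Then the collection I = {A ⊆ E : r(⋁A) = |A|} forms the independent sets of a matroid M on E, and the lattice of flats of M is isomorphic to L. -/

import Mathlib

open Set
open scoped Matroid

set_option linter.unusedSectionVars false
set_option maxHeartbeats 1000000

section GLAux

variable {L : Type*} [Lattice L] [Fintype L] [BoundedOrder L] {r : L → ℕ}

lemma gl_strictMono (hrcov : ∀ x y : L, x ⋖ y → r y = r x + 1) : StrictMono r := by
  have hsa : IsStronglyAtomic L := by
    letI : DecidableRel ((· < ·) : L → L → Prop) := Classical.decRel _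
    letI : DecidableRel ((· ≤ ·) : L → L → Prop) := Classical.decRel _
    letI := Fintype.toLocallyFiniteOrder (α := L)
    infer_instance
  have key : ∀ x y : L, x < y → r x < r y := by
    intro x
    refine (Finite.to_wellFoundedGT (α := L)).wf.induction
      (C := fun x => ∀ y, x < y → r x < r y) x ?_
    intro a ih y hay
    obtain ⟨z, hcov, hzy⟩ := exists_covBy_le_of_lt hay
    have hz := hrcov _ _ hcov
    rcases hzy.eq_or_lt with rfl | hlt
    · omega
    · have := ih z hcov.lt y hlt
      omega
  exact fun x y h => key x y h

lemma gl_mono (hrcov : ∀ x y : L, x ⋖ y → r y = r x + 1) : Monotone r :=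
  (gl_strictMono hrcov).monotone

lemma gl_r_atom (hr0 : r ⊥ = 0) (hrcov : ∀ x y : L, x ⋖ y → r y = r x + 1)
    {a : L} (ha : IsAtom a) : r a = 1 := by
  have := hrcov ⊥ a ha.bot_covBy
  omega

lemma gl_r_sup_le (hr0 : r ⊥ = 0) (hrcov : ∀ x y : L, x ⋖ y → r y = r x + 1)
    (hsemimod : ∀ x y : L, r (x ⊔ y) + r (x ⊓ y) ≤ r x + r y)
    {a : L} (ha : IsAtom a) (x : L) : r (a ⊔ x) ≤ r x + 1 := by
  by_cases hle : a ≤ x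
  · rw [sup_eq_right.2 hle]; omega
  · have hinf : a ⊓ x = ⊥ := by
      rcases (ha.le_iff.mp inf_le_left) with h | h
      · exact h
      · exact absurd (h ▸ inf_le_right) hle
    have := hsemimod a x
    rw [hinf, hr0, gl_r_atom hr0 hrcov ha] at this
    omega

lemma gl_r_sup_eq (hr0 : r ⊥ = 0) (hrcov : ∀ x y : L, x ⋖ y → r y = r x + 1)
    (hsemimod : ∀ x y : L, r (x ⊔ y) + r (x ⊓ y) ≤ r x + r y)
    {a : L} (ha : IsAtom a) {x : L} (hle : ¬ a ≤ x) : r (a ⊔ x) = r x + 1 := by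
  have h1 := gl_r_sup_le hr0 hrcov hsemimod ha x
  have hlt : x < a ⊔ x := lt_of_le_of_ne le_sup_right
    (fun h => hle (h ▸ le_sup_left))
  have := gl_strictMono hrcov hlt
  omega

variable [DecidableEq {a : L // IsAtom a}]

/-- join of a finite set of atoms -/
def gl_msup (A : Finset {a : L // IsAtom a}) : L := A.sup (fun a => a.1)

lemma gl_msup_insert (a : {a : L // IsAtom a}) (A : Finset {a : L // IsAtom a}) :
    gl_msup (insert a A) = a.1 ⊔ gl_msup A := Finset.sup_insert

lemma gl_r_msup_le_card (hr0 : r ⊥ = 0) (hrcov : ∀ x y : L, x ⋖ y → r y = r x + 1)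
    (hsemimod : ∀ x y : L, r (x ⊔ y) + r (x ⊓ y) ≤ r x + r y)
    (A : Finset {a : L // IsAtom a}) : r (gl_msup A) ≤ A.card := by
  induction A using Finset.induction with
  | empty => simp [gl_msup, hr0]
  | @insert a A ha ih =>
    rw [gl_msup_insert, Finset.card_insert_of_notMem ha]
    exact le_trans (gl_r_sup_le hr0 hrcov hsemimod a.2 _) (by omega)

lemma gl_r_msup_union_le (hr0 : r ⊥ = 0) (hrcov : ∀ x y : L, x ⋖ y → r y = r x + 1)
    (hsemimod : ∀ x y : L, r (x ⊔ y) + r (x ⊓ y) ≤ r x + r y)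
    (A B : Finset {a : L // IsAtom a}) :
    r (gl_msup (A ∪ B)) ≤ r (gl_msup A) + B.card := by
  induction B using Finset.induction with
  | empty => simp
  | @insert b B hb ih =>
    rw [Finset.union_insert, gl_msup_insert, Finset.card_insert_of_notMem hb]
    have := gl_r_sup_le hr0 hrcov hsemimod b.2 (gl_msup (A ∪ B))
    omega

lemma gl_ind_subset (hr0 : r ⊥ = 0) (hrcov : ∀ x y : L, x ⋖ y → r y = r x + 1)
    (hsemimod : ∀ x y : L, r (x ⊔ y) + r (x ⊓ y) ≤ r x + r y)
    {A B : Finset {a : L // IsAtom a}} (hAB : A ⊆ B)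
    (hB : r (gl_msup B) = B.card) : r (gl_msup A) = A.card := by
  have h1 := gl_r_msup_le_card hr0 hrcov hsemimod A
  have h2 := gl_r_msup_union_le hr0 hrcov hsemimod A (B \ A)
  rw [Finset.union_sdiff_of_subset hAB] at h2
  have h3 : (B \ A).card = B.card - A.card := Finset.card_sdiff_of_subset hAB
  have h4 : A.card ≤ B.card := Finset.card_le_card hAB
  omega

lemma gl_ind_aug (hr0 : r ⊥ = 0) (hrcov : ∀ x y : L, x ⋖ y → r y = r x + 1)
    (hsemimod : ∀ x y : L, r (x ⊔ y) + r (x ⊓ y) ≤ r x + r y)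
    {A B : Finset {a : L // IsAtom a}}
    (hA : r (gl_msup A) = A.card) (hB : r (gl_msup B) = B.card)
    (hcard : A.card < B.card) :
    ∃ b ∈ B, b ∉ A ∧ r (gl_msup (insert b A)) = (insert b A).card := by
  have hex : ∃ b ∈ B, ¬ (b.1 ≤ gl_msup A) := by
    by_contra h
    push_neg at h
    have hle : gl_msup B ≤ gl_msup A := Finset.sup_le h
    have := gl_mono hrcov hle
    omega
  obtain ⟨b, hbB, hble⟩ := hex
  have hbA : b ∉ A := fun h => hble (Finset.le_sup h)
  refine ⟨b, hbB, hbA, ?_⟩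
  rw [gl_msup_insert, Finset.card_insert_of_notMem hbA,
    gl_r_sup_eq hr0 hrcov hsemimod b.2 hble, hA]

end GLAux

/-- Let `L` be a geometric lattice (a finite ranked lattice in which every
element other than the bottom is a join of atoms and whose rank function is semimodular) with
atom set `E`.  Then `I = {A ⊆ E : r(⋁A) = |A|}` forms the independent sets of a matroid on `E`
whose lattice of flats is isomorphic to `L`. -/
theorem geometric_lattice_gives_matroid {L : Type*} [Lattice L] [Fintype L] [BoundedOrder L]
    (r : L → ℕ)
    (hr0 : r ⊥ = 0)
    (hrcov : ∀ x y : L, x ⋖ y → r y = r x + 1)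
    (hatomistic : ∀ x : L, x ≠ ⊥ → ∃ s : Finset L, (∀ a ∈ s, IsAtom a) ∧ x = s.sup id)
    (hsemimod : ∀ x y : L, r (x ⊔ y) + r (x ⊓ y) ≤ r x + r y) :
    ∃ M : Matroid {a : L // IsAtom a},
      M.E = Set.univ ∧
      (∀ A : Finset {a : L // IsAtom a},
        M.Indep ↑A ↔ r (A.sup (fun a => a.1)) = A.card) ∧
      Nonempty ({F : Set {a : L // IsAtom a} // M.IsFlat F} ≃o L) := by
  classical
  set α := {a : L // IsAtom a} with hα
  let Ind : Finset α → Prop := fun A => r (gl_msup A) = A.card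
  have hIndDef : ∀ A : Finset α, Ind A ↔ r (A.sup (fun a => a.1)) = A.card := fun A => Iff.rfl
  let M0 : IndepMatroid α := IndepMatroid.ofFinset Set.univ Ind
    (by simp [Ind, gl_msup, hr0])
    (fun I J hJ hIJ => gl_ind_subset hr0 hrcov hsemimod hIJ hJ)
    (fun I J hI hJ hc => gl_ind_aug hr0 hrcov hsemimod hI hJ hc)
    (fun I _ => subset_univ _)
  set M := M0.matroid with hM
  have hE : M.E = Set.univ := rfl
  -- `fsup` of a set of atoms
  let fsup : Set α → L := fun X => gl_msup (X.toFinite.toFinset)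
  have hfsup_le : ∀ (X : Set α) (b : α), b ∈ X → b.1 ≤ fsup X := by
    intro X b hb
    exact Finset.le_sup (by simpa using hb)
  have hfsup_sup_le : ∀ (X : Set α) (x : L), (∀ b ∈ X, b.1 ≤ x) → fsup X ≤ x := by
    intro X x h
    exact Finset.sup_le (fun b hb => h b (by simpa using hb))
  -- independence bridge
  have hindep_iff : ∀ A : Finset α, M.Indep ↑A ↔ Ind A := by
    intro A
    rw [hM, IndepMatroid.matroid_indep_iff]
    exact IndepMatroid.ofFinset_indep _ _ _ _ _ _
  have hindep_set_iff : ∀ X : Set α, M.Indep X ↔ Ind (X.toFinite.toFinset) := by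
    intro X
    rw [hM, IndepMatroid.matroid_indep_iff]
    refine (IndepMatroid.ofFinset_indep' _ _ _ _ _ _).trans ?_
    constructor
    · intro h
      exact h _ (X.toFinite.coe_toFinset).subset
    · intro h J hJ
      refine gl_ind_subset hr0 hrcov hsemimod ?_ h
      intro j hj
      exact (X.toFinite.mem_toFinset).2 (hJ hj)
  -- key: from a dependent insertion into an independent set, the atom is below the sup
  have hdep_le : ∀ (I : Set α) (e : α), M.Indep I → ¬ M.Indep (insert e I) →
      e.1 ≤ fsup I := by
    intro I e hI hdep
    by_contra hle
    apply hdep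
    rw [hindep_set_iff]
    have htf : (insert e I).toFinite.toFinset = insert e (I.toFinite.toFinset) := by
      ext x
      simp only [Set.Finite.mem_toFinset, Finset.mem_insert]
      exact Iff.rfl
    rw [htf]
    have heI : e ∉ I.toFinite.toFinset := by
      intro h
      exact hle (Finset.le_sup h)
    show r (gl_msup (insert e (I.toFinite.toFinset))) = (insert e (I.toFinite.toFinset)).card
    rw [gl_msup_insert, Finset.card_insert_of_notMem heI,
      gl_r_sup_eq hr0 hrcov hsemimod e.2 hle]
    rw [hindep_set_iff] at hI
    rw [hI]
  -- conversely a dependent insertion from a below-sup atom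
  have hle_dep : ∀ (I : Set α) (e : α), M.Indep I → e ∉ I → e.1 ≤ fsup I →
      ¬ M.Indep (insert e I) := by
    intro I e hI heI hle hind
    rw [hindep_set_iff] at hI hind
    have htf : (insert e I).toFinite.toFinset = insert e (I.toFinite.toFinset) := by
      ext x
      simp only [Set.Finite.mem_toFinset, Finset.mem_insert]
      exact Iff.rfl
    rw [htf] at hind
    have heI' : e ∉ I.toFinite.toFinset := by simpa using heI
    have hind' : r (gl_msup (insert e (I.toFinite.toFinset)))
        = (insert e (I.toFinite.toFinset)).card := hind
    have hI' : r (gl_msup (I.toFinite.toFinset)) = (I.toFinite.toFinset).card := hI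
    rw [gl_msup_insert, Finset.card_insert_of_notMem heI'] at hind'
    have hsup : e.1 ⊔ gl_msup (I.toFinite.toFinset) = gl_msup (I.toFinite.toFinset) :=
      sup_eq_right.2 hle
    rw [hsup, hI'] at hind'
    omega
  -- every flat is of the form {b | b ≤ x}
  have hflat_eq : ∀ F : Set α, M.IsFlat F → F = {b : α | b.1 ≤ fsup F} := by
    intro F hF
    apply Set.Subset.antisymm
    · intro b hb
      exact hfsup_le F b hb
    · intro e he
      obtain ⟨I, hI⟩ := M.exists_isBasis F (by rw [hE]; exact subset_univ _)
      -- every element of F is below the basis sup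
      have hsub : ∀ x ∈ F, x.1 ≤ fsup I := by
        intro x hx
        by_cases hxI : x ∈ I
        · exact hfsup_le I x hxI
        · exact hdep_le I x hI.indep (hI.insert_dep ⟨hx, hxI⟩).not_indep
      have hFI : fsup F ≤ fsup I := hfsup_sup_le F _ hsub
      have heI : e.1 ≤ fsup I := le_trans he hFI
      by_cases heF : e ∈ F
      · exact heF
      have heIset : e ∉ I := fun h => heF (hI.subset h)
      -- I is also a basis of insert e F
      have hbasis : M.IsBasis I (insert e F) := by
        rw [Matroid.isBasis_iff (by rw [hE]; exact subset_univ _)]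
        refine ⟨hI.indep, hI.subset.trans (subset_insert _ _), ?_⟩
        intro J hJ hIJ hJF
        by_cases heJ : e ∈ J
        · exfalso
          have hJ0 : M.Indep (J \ {e}) := hJ.subset (diff_subset)
          have hIJ0 : I ⊆ J \ {e} := fun i hi =>
            ⟨hIJ hi, fun h => heIset (by rwa [mem_singleton_iff.mp h] at hi)⟩
          have hle0 : e.1 ≤ fsup (J \ {e}) := by
            refine le_trans heI (hfsup_sup_le I _ ?_)
            intro i hi
            exact hfsup_le _ i (hIJ0 hi)
          have heJ0 : e ∉ J \ {e} := fun h => h.2 rfl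
          have := hle_dep (J \ {e}) e hJ0 heJ0 hle0
          apply this
          have : insert e (J \ {e}) = J := by
            ext x; simp only [Set.mem_insert_iff, Set.mem_diff, Set.mem_singleton_iff]
            constructor
            · rintro (rfl | ⟨h, _⟩) <;> assumption
            · intro hx
              by_cases hxe : x = e
              · exact Or.inl hxe
              · exact Or.inr ⟨hx, hxe⟩
          rwa [this]
        · refine hI.eq_of_subset_indep hJ hIJ ?_
          intro j hj
          rcases hJF hj with rfl | h
          · exact absurd hj heJ
          · exact h
      have := hF.subset_of_isBasis_of_isBasis hI hbasis
      exact this (mem_insert _ _)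
  -- every set of that form is a flat
  have hflat_of : ∀ x : L, M.IsFlat {b : α | b.1 ≤ x} := by
    intro x
    refine ⟨?_, by rw [hE]; exact subset_univ _⟩
    intro I X hIF hIX a haX
    by_cases haI : a ∈ I
    · exact hIF.subset haI
    · have hdep := (hIX.insert_dep ⟨haX, haI⟩).not_indep
      have hle := hdep_le I a hIX.indep hdep
      refine le_trans hle (hfsup_sup_le I x ?_)
      intro b hb
      exact hIF.subset hb
  -- sup of {b | b ≤ x} is x
  have hsup_flat : ∀ x : L, fsup {b : α | b.1 ≤ x} = x := by
    intro x
    apply le_antisymm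
    · exact hfsup_sup_le _ x (fun b hb => hb)
    · by_cases hx : x = ⊥
      · simp [hx]
      obtain ⟨s, hs, hxs⟩ := hatomistic x hx
      refine le_trans (le_of_eq hxs) (Finset.sup_le ?_)
      intro a ha
      have hax : a ≤ x := by rw [hxs]; exact Finset.le_sup (f := id) ha
      exact hfsup_le {b : α | b.1 ≤ x} ⟨a, hs a ha⟩ hax
  refine ⟨M, hE, fun A => (hindep_iff A).trans (hIndDef A), ?_⟩
  refine ⟨⟨⟨fun F => fsup F.1, fun x => ⟨{b : α | b.1 ≤ x}, hflat_of x⟩, ?_, ?_⟩, ?_⟩⟩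
  · rintro ⟨F, hF⟩
    exact Subtype.ext (hflat_eq F hF).symm
  · intro x
    exact hsup_flat x
  · rintro ⟨F, hF⟩ ⟨F', hF'⟩
    simp only [Equiv.coe_fn_mk]
    constructor
    · intro h b hb
      have hb' : b ∈ F := hb
      have hle : b.1 ≤ fsup F' := le_trans (hfsup_le F b hb') h
      show b ∈ F'
      rw [hflat_eq F' hF']
      exact hle
    · intro h
      exact hfsup_sup_le F _ (fun b hb => hfsup_le F' b (h hb))
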